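/- Suppose (X,σ) is a minimal subshift over a finite alphabet, G is a torsion-free subgroup of Aut(X), R ∈ ℕ, and w ∈ L_n(X) extends uniquely 2R times to both the right and the left; let w̃ ∈ L_{n+4R}(X) be the word obtained by extending w exactly 2R times in each direction. Then the map φ ↦ φ(w̃) is injective on Aut_R(X) ∩ G; consequently |Aut_R(X) ∩ G| ≤ P_X(n+2R). -/

import Mathlib

open Filter Topology

/-- The left shift `σ` on bi-infinite sequences over the alphabet `A`. -/
def shiftMap (A : Type*) : (ℤ → A) → (ℤ → A) := fun x i => x (i + 1)

/-- A subshift: a nonempty, closed, shift-invariant subset of `A^ℤ`. -/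
def IsSubshift {A : Type*} [TopologicalSpace A] (X : Set (ℤ → A)) : Prop :=
  X.Nonempty ∧ IsClosed X ∧ shiftMap A '' X = X

/-- A minimal subshift: a subshift with no nonempty proper closed shift-invariant subset. -/
def IsMinimalSubshift {A : Type*} [TopologicalSpace A] (X : Set (ℤ → A)) : Prop :=
  IsSubshift X ∧
    ∀ Y : Set (ℤ → A), Y ⊆ X → Y.Nonempty → IsClosed Y → shiftMap A '' Y = Y → Y = X

/-- The words of length `n` in the language of `X`. -/
def Lang {A : Type*} (X : Set (ℤ → A)) (n : ℕ) : Set (Fin n → A) :=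
  {w | ∃ x ∈ X, ∀ i : Fin n, x (i.val : ℤ) = w i}

/-- The complexity function `P_X(n)`, the number of words of length `n` in `X`. -/
noncomputable def complexity {A : Type*} (X : Set (ℤ → A)) (n : ℕ) : ℕ :=
  (Lang X n).ncard

/-- The one-sided cylinder set `[w]_0^+` of the word `w` in `X`. -/
def cylinder {A : Type*} (X : Set (ℤ → A)) {n : ℕ} (w : Fin n → A) : Set ↥X :=
  {x | ∀ i : Fin n, (x : ℤ → A) (i.val : ℤ) = w i}

/-- `φ` commutes with the shift on `X`. -/
def CommutesWithShift {A : Type*} (X : Set (ℤ → A)) (φ : ↥X → ↥X) : Prop :=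
  ∀ x y : ↥X, shiftMap A (x : ℤ → A) = (y : ℤ → A) →
    shiftMap A ((φ x : ℤ → A)) = ((φ y : ℤ → A))

/-- The automorphism group of the subshift `(X, σ)`: homeomorphisms of `X`
commuting with the shift, as a subgroup of the permutation group of `X`. -/
def Aut {A : Type*} [TopologicalSpace A] (X : Set (ℤ → A)) : Subgroup (Equiv.Perm ↥X) where
  carrier := {φ | Continuous ⇑φ ∧ Continuous ⇑φ.symm ∧
    CommutesWithShift X ⇑φ ∧ CommutesWithShift X ⇑φ.symm}
  one_mem' := by
    refine ⟨?_, ?_, ?_, ?_⟩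
    · simpa using continuous_id
    · exact continuous_id
    · intro x y h; simpa using h
    · intro x y h; exact h
  mul_mem' := by
    rintro φ ψ ⟨hφ1, hφ2, hφ3, hφ4⟩ ⟨hψ1, hψ2, hψ3, hψ4⟩
    refine ⟨?_, ?_, ?_, ?_⟩
    · have h : ⇑(φ * ψ) = ⇑φ ∘ ⇑ψ := rfl
      rw [h]; exact hφ1.comp hψ1
    · have h : ⇑(φ * ψ).symm = ⇑ψ.symm ∘ ⇑φ.symm := rfl
      rw [h]; exact hψ2.comp hφ2
    · intro x y h
      exact hφ3 (ψ x) (ψ y) (hψ3 x y h)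
    · intro x y h
      exact hψ4 (φ.symm x) (φ.symm y) (hφ4 x y h)
  inv_mem' := by
    rintro φ ⟨h1, h2, h3, h4⟩
    exact ⟨h2, h1, h4, h3⟩

/-- `φ` is determined at the coordinate `0` by the window `[-R, R]`, i.e. `φ` is a
block code of range `R`. -/
def IsBlockCode {A : Type*} (X : Set (ℤ → A)) (φ : ↥X → ↥X) (R : ℕ) : Prop :=
  ∀ x y : ↥X, (∀ i : ℤ, -(R : ℤ) ≤ i → i ≤ (R : ℤ) → (x : ℤ → A) i = (y : ℤ → A) i) →
    (φ x : ℤ → A) 0 = (φ y : ℤ → A) 0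

/-- `Aut_R(X)`: automorphisms `φ` such that both `φ` and `φ⁻¹` are block codes of range `R`. -/
def AutR {A : Type*} [TopologicalSpace A] (X : Set (ℤ → A)) (R : ℕ) : Set (Equiv.Perm ↥X) :=
  {φ | φ ∈ Aut X ∧ IsBlockCode X ⇑φ R ∧ IsBlockCode X ⇑φ.symm R}

/-- `w` extends uniquely `k` times to the right: there is exactly one word of length
`n + k` in the language whose first `n` letters are `w`. -/
def ExtendsUniquelyRight {A : Type*} (X : Set (ℤ → A)) {n : ℕ} (w : Fin n → A) (k : ℕ) : Prop :=
  ∃! u : Fin (n + k) → A, u ∈ Lang X (n + k) ∧ ∀ i : Fin n, u (Fin.castAdd k i) = w i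

/-- `w` extends uniquely `k` times to the left: there is exactly one word of length
`n + k` in the language whose last `n` letters are `w`. -/
def ExtendsUniquelyLeft {A : Type*} (X : Set (ℤ → A)) {n : ℕ} (w : Fin n → A) (k : ℕ) : Prop :=
  ∃! u : Fin (n + k) → A, u ∈ Lang X (n + k) ∧
    ∀ i : Fin n, u (Fin.cast (Nat.add_comm k n) (Fin.natAdd k i)) = w i

/-- The Følner ratio `|F △ gF| / |F|`. -/
noncomputable def folnerRatio {G : Type*} [Group G] (F : Finset G) (g : G) : ℝ :=
  letI := Classical.decEq G
  ((symmDiff F (F.image (fun h => g * h))).card : ℝ) / (F.card : ℝ)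

/-- A countable discrete group is amenable if it admits a Følner sequence. -/
def IsAmenableGrp (G : Type*) [Group G] : Prop :=
  ∃ F : ℕ → Finset G,
    (∀ g : G, ∀ᶠ k in atTop, g ∈ F k) ∧
    (∀ g : G, Tendsto (fun k => folnerRatio (F k) g) atTop (𝓝 0))

/-- `S` is a finite symmetric generating set of `G`. -/
def IsSymmGen {G : Type*} [Group G] (S : Finset G) : Prop :=
  (∀ s ∈ S, s⁻¹ ∈ S) ∧ Subgroup.closure (S : Set G) = ⊤

/-- The growth function `γ_G^S(n)`: the number of elements of `G` expressible as a
product of at most `n` elements of `S`. -/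
noncomputable def growthFn {G : Type*} [Group G] (S : Finset G) (n : ℕ) : ℕ :=
  Nat.card {g : G // ∃ l : List G, l.length ≤ n ∧ (∀ x ∈ l, x ∈ S) ∧ l.prod = g}

/-- `G` has subexponential growth. -/
def HasSubexpGrowth (G : Type*) [Group G] : Prop :=
  ∀ S : Finset G, IsSymmGen S →
    Tendsto (fun n : ℕ => Real.log (growthFn S n) / (n : ℝ)) atTop (𝓝 0)

/-- A monoid is torsion-free if no element other than `1` has finite order
(the definition `Monoid.IsTorsionFree` of the older Mathlib, since removed). -/
def Monoid.IsTorsionFree (G : Type*) [Monoid G] : Prop :=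
  ∀ g : G, g ≠ 1 → ¬IsOfFinOrder g

/-!
If `φ₁, φ₂ ∈ Aut_R(X) ∩ G` agree on `[w̃]` in the window `[R, n + 3R)`, then `ψ = φ₂⁻¹φ₁` is a
block code of range `2R` that fixes the central copy of `w` in every point of `[w̃]`; since `w`
extends uniquely `2R` times each way, `ψ` maps `[w̃]` into itself.

In a minimal subshift `w̃` occurs with bounded gaps. A block code of range at most `|w̃|` mapping
`[w̃]` into itself sends a point's block between two consecutive occurrences of `w̃` to a block
that depends only on that block, and this persists under iteration. So the powers `ψ^m` are
determined by their action on finitely many words of bounded length, two of them coincide, and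
`ψ` has finite order; torsion-freeness of `G` gives `ψ = 1`.

Reading `φ(w̃)` off one point of `[w̃]` therefore embeds `Aut_R(X) ∩ G` into `L_{n+2R}(X)`.
-/

open Set

section Shift

variable {A : Type*} {X : Set (ℤ → A)}

def shiftPerm (hX : shiftMap A '' X = X) : Equiv.Perm X where
  toFun x := ⟨shiftMap A x, hX.subset (mem_image_of_mem _ x.2)⟩
  invFun x := ⟨fun i => (x : ℤ → A) (i - 1), by
    obtain ⟨z, hz, hzx⟩ : (x : ℤ → A) ∈ shiftMap A '' X := hX.symm ▸ x.2
    convert hz using 1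
    funext i
    simp [← hzx, shiftMap]⟩
  left_inv x := by ext i; simp [shiftMap]
  right_inv x := by ext i; simp [shiftMap]

variable (hX : shiftMap A '' X = X)

@[simp]
lemma shiftPerm_zpow_apply (m : ℤ) (x : X) (i : ℤ) :
    ((shiftPerm hX ^ m) x : ℤ → A) i = (x : ℤ → A) (i + m) := by
  induction m using Int.induction_on generalizing x i with
  | zero => simp
  | succ k ih =>
    rw [zpow_add_one, Equiv.Perm.mul_apply, ih]
    simp [shiftPerm, shiftMap, add_assoc]
  | pred k ih =>
    rw [zpow_sub_one, Equiv.Perm.mul_apply, ih, Equiv.Perm.inv_def]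
    simp [shiftPerm, sub_eq_add_neg, add_assoc]

lemma CommutesWithShift.commute_shiftPerm {φ : Equiv.Perm X} (hφ : CommutesWithShift X ⇑φ) :
    Commute φ (shiftPerm hX) :=
  Equiv.ext fun x => Subtype.ext (hφ x (shiftPerm hX x) rfl).symm

end Shift

section Window

variable {A : Type*} {X : Set (ℤ → A)}

def window (x : ℤ → A) (a : ℤ) (n : ℕ) : Fin n → A := fun i => x (i + a)

lemma window_eq_window_iff {x y : ℤ → A} {a : ℤ} {n : ℕ} :
    window x a n = window y a n ↔ EqOn x y (Ico a (a + n)) := by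
  constructor
  · intro h i ⟨hi₁, hi₂⟩
    have := congrFun h ⟨(i - a).toNat, by omega⟩
    simp only [window] at this
    rwa [show ((i - a).toNat : ℤ) + a = i by omega] at this
  · intro h
    funext i
    exact h ⟨by omega, by have := i.isLt; omega⟩

lemma mem_cylinder_iff {n : ℕ} {w : Fin n → A} {x : X} :
    x ∈ cylinder X w ↔ window x 0 n = w := by
  simp [cylinder, window, funext_iff]

lemma mem_cylinder_of_eqOn {n : ℕ} {w : Fin n → A} {x y : X} (hx : x ∈ cylinder X w)
    (hxy : EqOn (x : ℤ → A) y (Ico 0 n)) : y ∈ cylinder X w := by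
  rw [mem_cylinder_iff] at hx ⊢
  rw [← hx, window_eq_window_iff.2 (by simpa using hxy.symm)]

lemma window_shiftMap (x : ℤ → A) (a : ℤ) (n : ℕ) :
    window (shiftMap A x) a n = window x (a + 1) n := by
  funext i; simp [window, shiftMap, add_assoc]

lemma window_mem_lang (hX : shiftMap A '' X = X) (x : X) (a : ℤ) (n : ℕ) :
    window (x : ℤ → A) a n ∈ Lang X n :=
  ⟨_, ((shiftPerm hX ^ a) x).2, fun i => by simp [window]⟩

variable (hX : shiftMap A '' X = X)

lemma window_shiftPerm_zpow (m : ℤ) (x : X) (a : ℤ) (n : ℕ) :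
    window ((shiftPerm hX ^ m) x : ℤ → A) a n = window x (a + m) n := by
  funext i; simp [window, add_assoc]

lemma zpow_mem_cylinder_iff {n : ℕ} {w : Fin n → A} {m : ℤ} {x : X} :
    (shiftPerm hX ^ m) x ∈ cylinder X w ↔ window x m n = w := by
  rw [mem_cylinder_iff, window_shiftPerm_zpow, zero_add]

end Window

section BlockCode

variable {A : Type*} {X : Set (ℤ → A)} (hX : shiftMap A '' X = X) {φ ψ : Equiv.Perm X}
  {R S : ℕ}

lemma apply_shiftPerm_zpow_apply (hc : Commute φ (shiftPerm hX)) (m : ℤ) (x : X) (i : ℤ) :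
    (φ ((shiftPerm hX ^ m) x) : ℤ → A) i = (φ x : ℤ → A) (i + m) := by
  rw [← Equiv.Perm.mul_apply, (hc.zpow_right m).eq, Equiv.Perm.mul_apply, shiftPerm_zpow_apply]

lemma IsBlockCode.apply_eq_apply (hφ : IsBlockCode X ⇑φ R) (hc : Commute φ (shiftPerm hX))
    {x y : X} {j : ℤ} (h : EqOn (x : ℤ → A) y (Icc (j - R) (j + R))) :
    (φ x : ℤ → A) j = (φ y : ℤ → A) j := by
  have key : ∀ z : X, (φ z : ℤ → A) j = (φ ((shiftPerm hX ^ j) z) : ℤ → A) 0 := fun z => by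
    rw [apply_shiftPerm_zpow_apply hX hc, zero_add]
  rw [key, key]
  exact hφ _ _ fun i hi₁ hi₂ => by simpa using h ⟨by omega, by omega⟩

lemma IsBlockCode.eqOn (hφ : IsBlockCode X ⇑φ R) (hc : Commute φ (shiftPerm hX)) {x y : X}
    {a b : ℤ} (h : EqOn (x : ℤ → A) y (Ico a b)) :
    EqOn (φ x : ℤ → A) (φ y) (Ico (a + R) (b - R)) := fun _ ⟨hj₁, hj₂⟩ =>
  hφ.apply_eq_apply hX hc (h.mono (Icc_subset_Ico (by omega) (by omega)))

lemma IsBlockCode.mul (hψ : IsBlockCode X ⇑ψ S) (hφ : IsBlockCode X ⇑φ R)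
    (hc : Commute φ (shiftPerm hX)) : IsBlockCode X ⇑(ψ * φ) (S + R) := fun _ _ h =>
  hψ _ _ fun _ hi₁ hi₂ =>
    hφ.apply_eq_apply hX hc fun k ⟨hk₁, hk₂⟩ =>
      h k (by push_cast at *; omega) (by push_cast at *; omega)

end BlockCode

section UniqueExtension

variable {A : Type*} {X : Set (ℤ → A)} {n k : ℕ} {w : Fin n → A} {x y : X} {a : ℤ}

lemma ExtendsUniquelyRight.eqOn (hX : shiftMap A '' X = X) (hw : ExtendsUniquelyRight X w k)
    (hx : window (x : ℤ → A) a n = w) (hy : window (y : ℤ → A) a n = w) :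
    EqOn (x : ℤ → A) y (Ico a (a + n + k)) := by
  obtain ⟨u, -, hu⟩ := hw
  have key : ∀ z : X, window (z : ℤ → A) a n = w → window (z : ℤ → A) a (n + k) = u :=
    fun z hz => hu _ ⟨window_mem_lang hX z a _, fun i => by rw [← hz]; rfl⟩
  simpa [add_assoc] using window_eq_window_iff.1 ((key x hx).trans (key y hy).symm)

lemma ExtendsUniquelyLeft.eqOn (hX : shiftMap A '' X = X) (hw : ExtendsUniquelyLeft X w k)
    (hx : window (x : ℤ → A) a n = w) (hy : window (y : ℤ → A) a n = w) :
    EqOn (x : ℤ → A) y (Ico (a - k) (a + n)) := by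
  obtain ⟨u, -, hu⟩ := hw
  have key : ∀ z : X, window (z : ℤ → A) a n = w → window (z : ℤ → A) (a - k) (n + k) = u :=
    fun z hz => hu _ ⟨window_mem_lang hX z _ _, fun i => by
      rw [← hz]
      simp only [window, Fin.val_cast, Fin.val_natAdd]
      exact congrArg _ (by push_cast; ring)⟩
  have := window_eq_window_iff.1 ((key x hx).trans (key y hy).symm)
  simpa [add_comm] using this

lemma eqOn_of_extendsUniquely (hX : shiftMap A '' X = X) (hwr : ExtendsUniquelyRight X w k)
    (hwl : ExtendsUniquelyLeft X w k) (hx : window (x : ℤ → A) a n = w)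
    (hy : window (y : ℤ → A) a n = w) : EqOn (x : ℤ → A) y (Ico (a - k) (a + n + k)) :=
  fun i ⟨hi₁, hi₂⟩ => if hi : i < a + n then hwl.eqOn hX hx hy ⟨hi₁, hi⟩
    else hwr.eqOn hX hx hy ⟨by omega, hi₂⟩

end UniqueExtension

section Minimal

variable {A : Type*} [TopologicalSpace A] [DiscreteTopology A] {X : Set (ℤ → A)} {N : ℕ}
  {v : Fin N → A}

lemma isOpen_setOf_window_eq (m : ℤ) : IsOpen {x : ℤ → A | window x m N = v} :=
  (isOpen_discrete {v}).preimage (f := (window · m N)) (continuous_pi fun _ => continuous_apply _)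

lemma IsMinimalSubshift.exists_window_eq_of_mem (hX : IsMinimalSubshift X) (hv : v ∈ Lang X N)
    {x : ℤ → A} (hx : x ∈ X) : ∃ m, window x m N = v := by
  obtain ⟨⟨-, hcl, hσ⟩, hmin⟩ := hX
  by_contra! hxv
  set Y := ⋂ m, {y : ℤ → A | window y m N = v}ᶜ
  have hY : shiftMap A ⁻¹' Y = Y := by
    ext y
    simp only [Y, mem_preimage, mem_iInter, mem_compl_iff, mem_ofPred_eq, window_shiftMap]
    exact ⟨fun h m => by simpa using h (m - 1), fun h m => h (m + 1)⟩
  have hXY : X ∩ Y = X :=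
    hmin _ inter_subset_left ⟨x, hx, by simpa [Y] using hxv⟩
      (hcl.inter (isClosed_iInter fun m => (isOpen_setOf_window_eq m).isClosed_compl))
      (by rw [← hY, image_inter_preimage, hσ, hY])
  obtain ⟨x₀, hx₀, hx₀v⟩ := hv
  have : x₀ ∈ Y := (hXY.symm ▸ hx₀ : x₀ ∈ X ∩ Y).2
  exact mem_iInter.1 this 0 (funext fun i => by simpa [window] using hx₀v i)

lemma IsMinimalSubshift.window_eq_syndetic [Finite A] (hX : IsMinimalSubshift X)
    (hv : v ∈ Lang X N) :
    ∃ K : ℕ, ∀ (x : X) (p : ℤ), ∃ a, p ≤ a ∧ a < p + K ∧ window (x : ℤ → A) a N = v := by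
  have hσ : shiftMap A '' X = X := hX.1.2.2
  obtain ⟨M, hM⟩ := hX.1.2.1.isCompact.elim_finite_subcover
    (fun m => {x : ℤ → A | window x m N = v}) isOpen_setOf_window_eq
    fun x hx => mem_iUnion.2 (hX.exists_window_eq_of_mem hv hx)
  set B := M.sup Int.natAbs
  refine ⟨2 * B + 1, fun x p => ?_⟩
  obtain ⟨m, hmM, hm⟩ := mem_iUnion₂.1 (hM ((shiftPerm hσ ^ (p + B)) x).2)
  have hmB : m.natAbs ≤ B := M.le_sup (f := Int.natAbs) hmM
  refine ⟨m + (p + B), by omega, by omega, ?_⟩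
  rw [← window_shiftPerm_zpow hσ]
  exact hm

lemma IsMinimalSubshift.exists_window_eq_around [Finite A] (hX : IsMinimalSubshift X)
    (hv : v ∈ Lang X N) :
    ∃ K : ℕ, ∀ (x : X) (j : ℤ), ∃ a b, a ≤ j ∧ j < b ∧ b < a + K ∧
      window (x : ℤ → A) a N = v ∧ window (x : ℤ → A) b N = v := by
  obtain ⟨K, hK⟩ := hX.window_eq_syndetic hv
  refine ⟨2 * K, fun x j => ?_⟩
  obtain ⟨a, ha₁, ha₂, ha⟩ := hK x (j + 1 - K)
  obtain ⟨b, hb₁, hb₂, hb⟩ := hK x (j + 1)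
  exact ⟨a, b, by omega, by omega, by omega, ha, hb⟩

end Minimal

section FiniteOrder

variable {A : Type*} {X : Set (ℤ → A)} {φ : Equiv.Perm X} {S N : ℕ} {v : Fin N → A}

lemma window_apply_eq_of_mapsTo (hX : shiftMap A '' X = X) (hc : Commute φ (shiftPerm hX))
    (hφ : MapsTo φ (cylinder X v) (cylinder X v)) {x : X} {a : ℤ}
    (hx : window (x : ℤ → A) a N = v) : window (φ x : ℤ → A) a N = v := by
  rw [← zpow_mem_cylinder_iff hX] at hx
  have := mem_cylinder_iff.1 (hφ hx)
  rw [← this]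
  funext i
  simp [window, apply_shiftPerm_zpow_apply hX hc]

lemma eqOn_Ico_of_window_eq (hX : shiftMap A '' X = X) (hc : Commute φ (shiftPerm hX))
    (hbc : IsBlockCode X ⇑φ S) (hSN : S ≤ N) (hφ : MapsTo φ (cylinder X v) (cylinder X v))
    {x y : X} {t : ℤ} (hx₀ : window (x : ℤ → A) 0 N = v) (hxt : window (x : ℤ → A) t N = v)
    (hy₀ : window (y : ℤ → A) 0 N = v) (hyt : window (y : ℤ → A) t N = v)
    (hxy : EqOn (x : ℤ → A) y (Ico 0 t)) : EqOn (φ x : ℤ → A) (φ y) (Ico 0 t) := by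
  have hframe : EqOn (x : ℤ → A) y (Ico 0 (t + N)) := fun i hi =>
    if h : i < t then hxy ⟨hi.1, h⟩
    else window_eq_window_iff.1 (hxt.trans hyt.symm) ⟨by omega, hi.2⟩
  have hstart : EqOn (φ x : ℤ → A) (φ y) (Ico 0 N) := by
    simpa using window_eq_window_iff.1 ((window_apply_eq_of_mapsTo hX hc hφ hx₀).trans
      (window_apply_eq_of_mapsTo hX hc hφ hy₀).symm)
  intro k ⟨hk₀, hkt⟩
  if hkS : k < S then exact hstart ⟨hk₀, by omega⟩
  else exact hbc.eqOn hX hc hframe ⟨by omega, by omega⟩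

lemma pow_eqOn_Ico_of_window_eq (hX : shiftMap A '' X = X) (hc : Commute φ (shiftPerm hX))
    (hbc : IsBlockCode X ⇑φ S) (hSN : S ≤ N) (hφ : MapsTo φ (cylinder X v) (cylinder X v))
    {x y : X} {t : ℤ} (hx₀ : window (x : ℤ → A) 0 N = v) (hxt : window (x : ℤ → A) t N = v)
    (hy₀ : window (y : ℤ → A) 0 N = v) (hyt : window (y : ℤ → A) t N = v)
    (hxy : EqOn (x : ℤ → A) y (Ico 0 t)) (m : ℕ) :
    EqOn ((φ ^ m) x : ℤ → A) ((φ ^ m) y) (Ico 0 t) := by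
  induction m with
  | zero => exact hxy
  | succ m ih =>
    have hcm : Commute (φ ^ m) (shiftPerm hX) := hc.pow_left m
    have hφm : MapsTo ⇑(φ ^ m) (cylinder X v) (cylinder X v) := by
      rw [Equiv.Perm.coe_pow]; exact hφ.iterate m
    rw [pow_succ', Equiv.Perm.mul_apply, Equiv.Perm.mul_apply]
    exact eqOn_Ico_of_window_eq hX hc hbc hSN hφ
      (window_apply_eq_of_mapsTo hX hcm hφm hx₀) (window_apply_eq_of_mapsTo hX hcm hφm hxt)
      (window_apply_eq_of_mapsTo hX hcm hφm hy₀) (window_apply_eq_of_mapsTo hX hcm hφm hyt) ih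

lemma eq_of_eqOn_between_windows (hX : shiftMap A '' X = X) {ψ₁ ψ₂ : Equiv.Perm X}
    (hc₁ : Commute ψ₁ (shiftPerm hX)) (hc₂ : Commute ψ₂ (shiftPerm hX)) {K : ℕ}
    (hK : ∀ (x : X) (j : ℤ), ∃ a b, a ≤ j ∧ j < b ∧ b < a + K ∧
      window (x : ℤ → A) a N = v ∧ window (x : ℤ → A) b N = v)
    (h : ∀ (y : X) (t : ℤ), 0 < t → t < K → window (y : ℤ → A) 0 N = v →
      window (y : ℤ → A) t N = v → EqOn (ψ₁ y : ℤ → A) (ψ₂ y) (Ico 0 t)) :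
    ψ₁ = ψ₂ := by
  ext x : 1
  apply Subtype.ext
  funext j
  obtain ⟨a, b, haj, hjb, hba, ha, hb⟩ := hK x j
  have := h ((shiftPerm hX ^ a) x) (b - a) (by omega) (by omega)
    (by rw [window_shiftPerm_zpow, zero_add, ha])
    (by rw [window_shiftPerm_zpow, sub_add_cancel, hb])
    (⟨by omega, by omega⟩ : j - a ∈ Ico 0 (b - a))
  rwa [apply_shiftPerm_zpow_apply hX hc₁, apply_shiftPerm_zpow_apply hX hc₂, sub_add_cancel] at this

theorem isOfFinOrder_of_mapsTo_cylinder [Finite A] [TopologicalSpace A] [DiscreteTopology A]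
    (hX : IsMinimalSubshift X) (hc : Commute φ (shiftPerm hX.1.2.2)) (hbc : IsBlockCode X ⇑φ S)
    (hSN : S ≤ N) (hv : v ∈ Lang X N) (hφ : MapsTo φ (cylinder X v) (cylinder X v)) :
    IsOfFinOrder φ := by
  have hσ : shiftMap A '' X = X := hX.1.2.2
  obtain ⟨K, hK⟩ := hX.exists_window_eq_around hv
  set L := K + N
  have hrep : ∀ u : Lang X L, ∃ z : X, window (z : ℤ → A) 0 L = u :=
    fun ⟨_, x, hx, hxu⟩ => ⟨⟨x, hx⟩, funext fun i => by simpa [window] using hxu i⟩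
  choose rep hrep using hrep
  let g : ℕ → Lang X L → Fin L → A := fun m u => window ((φ ^ m) (rep u) : ℤ → A) 0 L
  suffices hg : ∀ p q, g p = g q → φ ^ p = φ ^ q by
    by_contra hfin
    rw [← injective_pow_iff_not_isOfFinOrder] at hfin
    exact not_injective_infinite_finite g fun p q hpq => hfin (hg p q hpq)
  intro p q hpq
  refine eq_of_eqOn_between_windows hσ (hc.pow_left p) (hc.pow_left q) hK
    fun y t ht₀ htK hy₀ hyt => ?_
  -- with `L = K + N`, the representative `z` of `y`'s word of length `L` agrees with `y` on the
  -- whole framed block `[0, t + N)`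
  set z := rep ⟨_, window_mem_lang hσ y 0 L⟩
  have hyz : EqOn (y : ℤ → A) z (Ico 0 L) := by
    simpa using window_eq_window_iff.1 (hrep ⟨_, window_mem_lang hσ y 0 L⟩).symm
  have hz₀ : window (z : ℤ → A) 0 N = v :=
    (window_eq_window_iff.2 (hyz.mono (Ico_subset_Ico le_rfl (by omega)))).symm.trans hy₀
  have hzt : window (z : ℤ → A) t N = v :=
    (window_eq_window_iff.2 (hyz.mono (Ico_subset_Ico (by omega) (by omega)))).symm.trans hyt
  have hpow := pow_eqOn_Ico_of_window_eq hσ hc hbc hSN hφ hy₀ hyt hz₀ hzt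
    (hyz.mono (Ico_subset_Ico le_rfl (by omega)))
  have hpq' : EqOn ((φ ^ p) z : ℤ → A) ((φ ^ q) z) (Ico 0 L) := by
    simpa using window_eq_window_iff.1 (congrFun hpq ⟨_, window_mem_lang hσ y 0 L⟩)
  exact fun i hi => (hpow p hi).trans ((hpq' ⟨hi.1, by have := hi.2; omega⟩).trans (hpow q hi).symm)

end FiniteOrder

lemma Monoid.IsTorsionFree.eq_one_of_mem {M : Type*} [Group M] {H : Subgroup M}
    (hH : Monoid.IsTorsionFree H) {g : M} (hg : g ∈ H) (hfin : IsOfFinOrder g) : g = 1 := by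
  by_contra hne
  exact hH ⟨g, hg⟩ (by simpa [Subtype.ext_iff] using hne)
    (Submonoid.isOfFinOrder_coe (H := H.toSubmonoid) (x := ⟨g, hg⟩) |>.1 hfin)

theorem eq_of_eqOn_cylinder {A : Type*} [Finite A] [TopologicalSpace A] [DiscreteTopology A]
    {X : Set (ℤ → A)} (hX : IsMinimalSubshift X) {G : Subgroup (Equiv.Perm X)}
    (hTF : Monoid.IsTorsionFree G) {R n : ℕ} {w : Fin n → A}
    (hwr : ExtendsUniquelyRight X w (2 * R)) (hwl : ExtendsUniquelyLeft X w (2 * R))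
    {wt : Fin (n + 4 * R) → A} (hwt : wt ∈ Lang X (n + 4 * R))
    (hcenter : ∀ x ∈ cylinder X wt, window (x : ℤ → A) (2 * R) n = w) :
    ∀ φ₁ ∈ AutR X R ∩ (G : Set (Equiv.Perm X)), ∀ φ₂ ∈ AutR X R ∩ (G : Set (Equiv.Perm X)),
      (∀ x ∈ cylinder X wt, EqOn (φ₁ x : ℤ → A) (φ₂ x) (Ico R (n + 3 * R))) → φ₁ = φ₂ := by
  rintro φ₁ ⟨⟨hAut₁, hbc₁, -⟩, hG₁⟩ φ₂ ⟨⟨hAut₂, -, hbc₂⟩, hG₂⟩ h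
  have hσ : shiftMap A '' X = X := hX.1.2.2
  have hc₁ : Commute φ₁ (shiftPerm hσ) := hAut₁.2.2.1.commute_shiftPerm hσ
  have hc₂ : Commute φ₂⁻¹ (shiftPerm hσ) := (hAut₂.2.2.1.commute_shiftPerm hσ).inv_left
  have hbc₂' : IsBlockCode X ⇑φ₂⁻¹ R := hbc₂
  have hmaps : MapsTo ⇑(φ₂⁻¹ * φ₁) (cylinder X wt) (cylinder X wt) := by
    intro x hx
    have hmid : EqOn ((φ₂⁻¹ * φ₁) x : ℤ → A) x (Ico (2 * R) (n + 2 * R)) := by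
      have := hbc₂'.eqOn hσ hc₂ (h x hx)
      rw [show φ₂⁻¹ (φ₂ x) = x from φ₂.symm_apply_apply x] at this
      exact this.mono (Ico_subset_Ico (by omega) (by omega))
    have hwx := hcenter x hx
    have hwψ : window ((φ₂⁻¹ * φ₁) x : ℤ → A) (2 * R) n = w :=
      (window_eq_window_iff.2 (hmid.mono (Ico_subset_Ico le_rfl (by omega)))).trans hwx
    exact mem_cylinder_of_eqOn hx ((eqOn_of_extendsUniquely hσ hwr hwl hwψ hwx).symm.mono
      (Ico_subset_Ico (by omega) (by omega)))
  have hfin : IsOfFinOrder (φ₂⁻¹ * φ₁) :=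
    isOfFinOrder_of_mapsTo_cylinder hX (hc₂.mul_left hc₁) (hbc₂'.mul hσ hbc₁ hc₁) (by omega) hwt
      hmaps
  exact (inv_mul_eq_one.1 (hTF.eq_one_of_mem (mul_mem (inv_mem hG₂) hG₁) hfin)).symm

theorem card_le_complexity {A : Type*} [Finite A] [TopologicalSpace A] {X : Set (ℤ → A)}
    (hX : shiftMap A '' X = X) {R m ℓ : ℕ} {S : Set (Equiv.Perm X)} (hS : S ⊆ AutR X R)
    {v : Fin m → A} (hv : v ∈ Lang X m) (hℓ : ℓ + 2 * R ≤ m)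
    (hinj : ∀ φ₁ ∈ S, ∀ φ₂ ∈ S,
      (∀ x ∈ cylinder X v, EqOn (φ₁ x : ℤ → A) (φ₂ x) (Ico R (R + ℓ))) → φ₁ = φ₂) :
    Nat.card S ≤ complexity X ℓ := by
  obtain ⟨x₀, hx₀X, hx₀⟩ := hv
  let f : S → Lang X ℓ := fun φ => ⟨window (φ.1 ⟨x₀, hx₀X⟩ : ℤ → A) R ℓ, window_mem_lang hX _ _ _⟩
  have hf : Function.Injective f := by
    intro φ ψ hφψ
    refine Subtype.ext (hinj _ φ.2 _ ψ.2 fun x hx => ?_)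
    have hxx₀ : EqOn (x : ℤ → A) x₀ (Ico 0 m) := by
      simpa using window_eq_window_iff.1
        ((mem_cylinder_iff.1 hx).trans (mem_cylinder_iff (x := ⟨x₀, hx₀X⟩) |>.1 hx₀).symm)
    have key : ∀ χ ∈ S, EqOn (χ x : ℤ → A) (χ ⟨x₀, hx₀X⟩) (Ico R (R + ℓ)) := fun χ hχ =>
      ((hS hχ).2.1.eqOn hX ((hS hχ).1.2.2.1.commute_shiftPerm hX) hxx₀).mono
        (Ico_subset_Ico (by simp) (by omega))
    have hwin := window_eq_window_iff.1 (congrArg Subtype.val hφψ)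
    exact fun j hj => (key φ φ.2 hj).trans ((hwin hj).trans (key ψ ψ.2 hj).symm)
  exact (Nat.card_le_card_of_injective f hf).trans_eq (Nat.card_coe_set_eq _)

/-- For a minimal subshift, a torsion-free subgroup `G ≤ Aut(X)`, a word
`w` of length `n` extending uniquely `2R` times to both sides, and `w̃` the word of
length `n + 4R` obtained by extending `w` exactly `2R` times in each direction: the map
`φ ↦ φ(w̃)` is injective on `Aut_R(X) ∩ G` (if the images of points of `[w̃]₀⁺` under
`φ₁, φ₂` agree on the window `[R, n + 3R)` then `φ₁ = φ₂`); consequently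
`|Aut_R(X) ∩ G| ≤ P_X(n + 2R)`. -/
theorem stmt17 {A : Type*} [Fintype A] [TopologicalSpace A] [DiscreteTopology A]
    (X : Set (ℤ → A)) (hX : IsMinimalSubshift X)
    (G : Subgroup (Equiv.Perm ↥X)) (hTF : Monoid.IsTorsionFree ↥G)
    (R n : ℕ) (w : Fin n → A)
    (hwr : ExtendsUniquelyRight X w (2 * R)) (hwl : ExtendsUniquelyLeft X w (2 * R))
    (wt : Fin (n + 4 * R) → A) (hwt : wt ∈ Lang X (n + 4 * R))
    (hcent : ∀ i : Fin n, wt ⟨i.val + 2 * R, by have := i.isLt; omega⟩ = w i) :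
    (∀ φ₁ ∈ AutR X R ∩ (G : Set (Equiv.Perm ↥X)),
      ∀ φ₂ ∈ AutR X R ∩ (G : Set (Equiv.Perm ↥X)),
      (∀ x ∈ cylinder X wt, ∀ j : ℤ, (R : ℤ) ≤ j → j < (n : ℤ) + 3 * R →
          (φ₁ x : ℤ → A) j = (φ₂ x : ℤ → A) j) → φ₁ = φ₂) ∧
    Nat.card ↥(AutR X R ∩ (G : Set (Equiv.Perm ↥X))) ≤ complexity X (n + 2 * R) := by
  have hcenter : ∀ x ∈ cylinder X wt, window (x : ℤ → A) (2 * R) n = w := fun x hx =>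
    funext fun i => by rw [← hcent i, ← hx]; simp [window]
  have hinj := eq_of_eqOn_cylinder hX hTF hwr hwl hwt hcenter
  refine ⟨fun φ₁ h₁ φ₂ h₂ h => hinj φ₁ h₁ φ₂ h₂ fun x hx j hj => h x hx j hj.1 hj.2, ?_⟩
  exact card_le_complexity hX.1.2.2 inter_subset_left hwt (by omega)
    fun φ₁ h₁ φ₂ h₂ h => hinj φ₁ h₁ φ₂ h₂ fun x hx =>
      (h x hx).mono (Ico_subset_Ico le_rfl (by push_cast; omega))
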